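/- Let q be a prime power and S a set of q+1 points in PG(2,q). The number of lines disjoint from S equals 0 if and only if S is the set of points of a line of PG(2,q). -/

import Mathlib

/-- The projective plane `PG(2,q)`: points are 1-dimensional subspaces of `F³`. -/
abbrev PG (F : Type*) [Field F] := Projectivization F (Fin 3 → F)

/-- Incidence between a point and a line of `PG(2,q)` (lines given by dual coordinates):
`a·x + b·y + c·z = 0`. -/
def PGIncident {F : Type*} [Field F] (p l : PG F) : Prop :=
  ∑ j : Fin 3, p.rep j * l.rep j = 0

/-- The number `u_i(S)` of lines of `PG(2,q)` meeting the point set `S` in exactly `i` points. -/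
noncomputable def uIdx {F : Type*} [Field F] (S : Set (PG F)) (i : ℕ) : ℕ :=
  Nat.card {l : PG F // Nat.card {p : PG F // p ∈ S ∧ PGIncident p l} = i}

/-!
Two lines of `PG(2,q)` always meet, so a line meets every line. Conversely, suppose every line
meets `S`, let `a ≠ b` lie in `S`, and let `c ∉ S` lie on the line `ab`. Then `p ↦ cp` maps `S`
onto the `q + 1` lines through `c`, since each of them meets `S` and the only line through `c` and
`p` is `cp`. Both sets have `q + 1` elements, so this map is injective; but it sends `a` and `b`
to the same line `ab`. Hence `ab ⊆ S`, and the two sets have the same size.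
-/

open scoped LinearAlgebra.Projectivization

theorem Submodule.card_projectivization {K V : Type*} [DivisionRing K] [AddCommGroup V]
    [Module K V] (W : Submodule K V) : Nat.card W.projectivization = Nat.card (ℙ K W) := by
  let ι := Projectivization.map W.subtype W.injective_subtype
  have hι : Set.range ι = (W.projectivization : Set (ℙ K V)) := by
    ext p
    induction p with | h v hv =>
    refine ⟨?_, fun hvW => ⟨.mk K ⟨v, hvW⟩ ?_, Projectivization.map_mk ..⟩⟩
    · rintro ⟨w, hw⟩
      induction w with | h w hw0 =>
      obtain ⟨a, rfl⟩ :=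
        (Projectivization.mk_eq_mk_iff' ..).1 (hw.symm.trans (Projectivization.map_mk ..))
      exact W.smul_mem _ w.2
    · simpa [← Submodule.coe_eq_zero] using hv
  rw [← Nat.card_range_of_injective (Projectivization.map_injective _ W.injective_subtype), hι]
  rfl

namespace Projectivization

variable {F : Type*} [Field F]

theorem card_orthogonal [Finite F] {m : Type*} [Fintype m] (l : ℙ F (m → F)) :
    Nat.card {p : ℙ F (m → F) // p.orthogonal l} =
      ∑ i ∈ Finset.range (Fintype.card m - 1), Nat.card F ^ i := by
  set f : Module.Dual F (m → F) := dotProductBilin F F l.rep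
  have hf : f ≠ 0 := fun h => l.rep_nonzero (dotProduct_eq_zero_iff.1 (LinearMap.congr_fun h))
  have e : {p : ℙ F (m → F) // p.orthogonal l} ≃ (LinearMap.ker f).projectivization :=
    Equiv.subtypeEquivRight fun p => by
      induction p with | h v hv =>
      rw [Submodule.mk_mem_projectivization_iff, LinearMap.mem_ker, ← l.mk_rep, orthogonal_mk,
        dotProduct_comm]
      rfl
  have hker := f.finrank_ker_add_one_of_ne_zero hf
  rw [Module.finrank_pi] at hker
  rw [Nat.card_congr e, Submodule.card_projectivization, card_of_finrank]
  omega

theorem eq_cross_of_orthogonal [DecidableEq F] {u v w : ℙ F (Fin 3 → F)} (h : v ≠ w)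
    (hv : u.orthogonal v) (hw : u.orthogonal w) : u = cross v w := by
  induction u with | h u hu =>
  induction v with | h v hv' =>
  induction w with | h w hw' =>
  rw [cross_mk_of_ne hv' hw' h, mk_eq_mk_iff_crossProduct_eq_zero, cross_cross_eq_smul_sub_smul',
    (orthogonal_mk hu hw').1 hw, dotProduct_comm, (orthogonal_mk hu hv').1 hv]
  simp

end Projectivization

section PG

open Projectivization

variable {F : Type*} [Field F] {p q l : PG F}

theorem pgIncident_iff_orthogonal : PGIncident p l ↔ p.orthogonal l := by
  conv_rhs => rw [← p.mk_rep, ← l.mk_rep]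
  rfl

theorem PGIncident.symm (h : PGIncident p l) : PGIncident l p :=
  pgIncident_iff_orthogonal.2 (orthogonal_comm.1 (pgIncident_iff_orthogonal.1 h))

theorem pgIncident_cross_left [DecidableEq F] (h : p ≠ q) : PGIncident p (cross p q) :=
  pgIncident_iff_orthogonal.2 (orthogonal_cross_left h)

theorem pgIncident_cross_right [DecidableEq F] (h : p ≠ q) : PGIncident q (cross p q) :=
  pgIncident_iff_orthogonal.2 (orthogonal_cross_right h)

theorem eq_cross_of_pgIncident [DecidableEq F] (h : p ≠ q) (hp : PGIncident p l)
    (hq : PGIncident q l) : l = cross p q :=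
  eq_cross_of_orthogonal h (pgIncident_iff_orthogonal.1 hp.symm)
    (pgIncident_iff_orthogonal.1 hq.symm)

theorem card_points_on_line [Finite F] (l : PG F) :
    Nat.card {p : PG F // PGIncident p l} = Nat.card F + 1 := by
  simp [pgIncident_iff_orthogonal, card_orthogonal, Finset.sum_range_succ, add_comm]

theorem card_lines_through_point [Finite F] (p : PG F) :
    Nat.card {l : PG F // PGIncident p l} = Nat.card F + 1 := by
  rw [← card_points_on_line p]
  exact Nat.card_congr (Equiv.subtypeEquivRight fun _ => ⟨PGIncident.symm, PGIncident.symm⟩)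

theorem exists_common_point [Finite F] (l m : PG F) : ∃ p, PGIncident p l ∧ PGIncident p m := by
  classical
  rcases eq_or_ne l m with rfl | hlm
  · obtain ⟨p, hp⟩ : Nonempty {p : PG F // PGIncident p l} :=
      Finite.card_pos_iff.1 (by rw [card_points_on_line]; omega)
    exact ⟨p, hp, hp⟩
  · exact ⟨cross l m, (pgIncident_cross_left hlm).symm, (pgIncident_cross_right hlm).symm⟩

theorem uIdx_zero_eq_zero_iff [Finite F] (S : Set (PG F)) :
    uIdx S 0 = 0 ↔ ∀ l : PG F, ∃ p ∈ S, PGIncident p l := by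
  simp [uIdx, Finite.card_eq_zero_iff, isEmpty_subtype]

theorem mem_of_pgIncident_cross_of_forall_meets [Finite F] [DecidableEq F] {S : Set (PG F)}
    (hS : Nat.card S = Nat.card F + 1) (hmeet : ∀ l : PG F, ∃ p ∈ S, PGIncident p l)
    {a b c : PG F} (ha : a ∈ S) (hb : b ∈ S) (hab : a ≠ b) (hc : PGIncident c (cross a b)) :
    c ∈ S := by
  by_contra hcS
  have hne {p : PG F} (hp : p ∈ S) : c ≠ p := fun h => hcS (h ▸ hp)
  let join : S → {l : PG F // PGIncident c l} := fun p =>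
    ⟨cross c p, pgIncident_cross_left (hne p.2)⟩
  have hsurj : Function.Surjective join := by
    rintro ⟨m, hcm⟩
    obtain ⟨p, hp, hpm⟩ := hmeet m
    exact ⟨⟨p, hp⟩, Subtype.ext (eq_cross_of_pgIncident (hne hp) hcm hpm).symm⟩
  have hinj : Function.Injective join :=
    (hsurj.bijective_of_nat_card_le (by rw [hS, card_lines_through_point])).1
  have hjoin : join ⟨a, ha⟩ = join ⟨b, hb⟩ := Subtype.ext <|
    (eq_cross_of_pgIncident (hne ha) hc (pgIncident_cross_left hab)).symm.trans
      (eq_cross_of_pgIncident (hne hb) hc (pgIncident_cross_right hab))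
  exact hab (congrArg Subtype.val (hinj hjoin))

end PG

/-- for a `(q+1)`-set `S` in `PG(2,q)`, the number of lines disjoint from
`S` is `0` if and only if `S` is the point set of a line of `PG(2,q)`. -/
theorem stmt5 (F : Type*) [Field F] [Fintype F] (S : Set (PG F))
    (hS : Nat.card S = Fintype.card F + 1) :
    uIdx S 0 = 0 ↔ ∃ l : PG F, S = {p : PG F | PGIncident p l} := by
  classical
  rw [← Nat.card_eq_fintype_card] at hS
  rw [uIdx_zero_eq_zero_iff]
  constructor
  · intro hmeet
    obtain ⟨a, ha, b, hb, hab⟩ := (Set.one_lt_ncard S.toFinite).1 <| by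
      rw [← Nat.card_coe_set_eq, hS]
      have := Finite.one_lt_card (α := F)
      omega
    refine ⟨Projectivization.cross a b, (Set.eq_of_subset_of_ncard_le ?_ ?_ S.toFinite).symm⟩
    · exact fun c hc => mem_of_pgIncident_cross_of_forall_meets hS hmeet ha hb hab hc
    · rw [← Nat.card_coe_set_eq, ← Nat.card_coe_set_eq, hS]
      exact (card_points_on_line _).ge
  · rintro ⟨l, rfl⟩ m
    exact exists_common_point l m
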